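/- Let A, B be commuting von Neumann algebras acting on H with cyclic unit vector Ω, and suppose there is a one-parameter unitary group U(a) with positive generator fixing Ω, normalizing A, commuting with B elementwise in the adjoint sense, and satisfying the cluster property: ⟨Ω, U(a)XU(a)* Y Ω⟩ → ⟨Ω, X Ω⟩⟨Ω, Y Ω⟩ as a → ∞ for X ∈ A, Y ∈ B. Then the vacuum factorizes: ⟨Ω, X Y Ω⟩ = ⟨Ω, X Ω⟩⟨Ω, Y Ω⟩ for all X ∈ A, Y ∈ B. -/

import Mathlib

open scoped InnerProductSpace
open Filter

/-- `F : ℝ → ℂ` extends to a bounded continuous function on the closed half-plane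
`{z | 0 ≤ σ * z.im}`, holomorphic in its interior, restricting to `F` on `ℝ`. -/
def ExtendsToHalfPlane (σ : ℝ) (F : ℝ → ℂ) : Prop :=
  ∃ G : ℂ → ℂ, ContinuousOn G {z : ℂ | 0 ≤ σ * z.im} ∧
    DifferentiableOn ℂ G {z : ℂ | 0 < σ * z.im} ∧
    (∃ C : ℝ, ∀ z ∈ {z : ℂ | 0 ≤ σ * z.im}, ‖G z‖ ≤ C) ∧
    ∀ x : ℝ, G (x : ℂ) = F x

/-- Spectral characterization of positivity of the self-adjoint generator of a
one-parameter unitary group. -/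
def HasPositiveGenerator {H : Type*} [NormedAddCommGroup H] [InnerProductSpace ℂ H]
    (U : ℝ → H →L[ℂ] H) : Prop :=
  ∀ ξ η : H, ExtendsToHalfPlane 1 (fun a => ⟪ξ, U a η⟫_ℂ)

/-! The matrix coefficient `F a = ⟪Ω, U a X U (-a) Y Ω⟫` can be written in two ways: commuting
`U a X U (-a)` past `Y` and using `U (-a) Ω = Ω` gives `⟪Y* Ω, U a (X Ω)⟫`, while unitarity and
`U a Ω = Ω` give `⟪X* Ω, U (-a) (Y Ω)⟫`. Positivity of the generator makes `F` the boundary value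
of a bounded holomorphic function on the upper half-plane through the first expression, and on the
lower half-plane through the second. By Morera's theorem the two glue across `ℝ` to a bounded
entire function, so `F` is constant by Liouville's theorem, and the cluster property identifies
`F 0 = ⟪Ω, X Y Ω⟫` with `⟪Ω, X Ω⟫ ⟪Ω, Y Ω⟫`. -/

namespace Complex

open Set intervalIntegral MeasureTheory

variable {E : Type*} [NormedAddCommGroup E] [NormedSpace ℂ E] {f : ℂ → E}

theorem wedgeIntegral_add_wedgeIntegral_eq_zero_of_continuous_of_im_mul_nonneg
    (hc : Continuous f) (hd : ∀ z : ℂ, z.im ≠ 0 → DifferentiableAt ℂ f z) {z w : ℂ}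
    (hzw : 0 ≤ z.im * w.im) : wedgeIntegral z w f + wedgeIntegral w z f = 0 := by
  rw [wedgeIntegral_add_wedgeIntegral_eq]
  refine integral_boundary_rect_eq_zero_of_continuousOn_of_differentiableOn f z w
    hc.continuousOn fun u hu => (hd u ?_).differentiableWithinAt
  obtain ⟨hlo, hhi⟩ := (mem_reProdIm.1 hu).2
  rintro hu0
  rcases le_total z.im w.im with h | h
  · simp only [hu0, min_eq_left h, max_eq_right h] at hlo hhi; nlinarith
  · simp only [hu0, min_eq_right h, max_eq_left h] at hlo hhi; nlinarith

theorem isConservativeOn_univ_of_continuous_of_differentiableAt_im_ne_zero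
    (hc : Continuous f) (hd : ∀ z : ℂ, z.im ≠ 0 → DifferentiableAt ℂ f z) :
    IsConservativeOn f univ := by
  intro z w _
  rw [← add_eq_zero_iff_eq_neg]
  -- cut the rectangle along the real axis
  have hlow := wedgeIntegral_add_wedgeIntegral_eq_zero_of_continuous_of_im_mul_nonneg hc hd
    (z := z) (w := w.re) (by simp)
  have hup := wedgeIntegral_add_wedgeIntegral_eq_zero_of_continuous_of_im_mul_nonneg hc hd
    (z := z.re) (w := w) (by simp)
  have hint : ∀ x a b : ℝ, IntervalIntegrable (fun y : ℝ => f (x + y * I)) volume a b :=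
    fun x a b => (hc.comp (by fun_prop)).intervalIntegrable a b
  rw [wedgeIntegral_add_wedgeIntegral_eq] at hlow hup ⊢
  simp only [ofReal_re, ofReal_im, ofReal_zero, zero_mul, add_zero] at hlow hup
  rw [← integral_add_adjacent_intervals (hint w.re z.im 0) (hint w.re 0 w.im),
    ← integral_add_adjacent_intervals (hint z.re z.im 0) (hint z.re 0 w.im)]
  linear_combination (norm := module) hlow + hup

theorem differentiable_of_continuous_of_differentiableAt_im_ne_zero [CompleteSpace E]
    (hc : Continuous f) (hd : ∀ z : ℂ, z.im ≠ 0 → DifferentiableAt ℂ f z) :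
    Differentiable ℂ f :=
  differentiableOn_univ.1 <|
    (isConservativeOn_and_continuousOn_iff_isDifferentiableOn isOpen_univ).1
      ⟨isConservativeOn_univ_of_continuous_of_differentiableAt_im_ne_zero hc hd, hc.continuousOn⟩

end Complex

namespace ExtendsToHalfPlane

variable {σ : ℝ} {F : ℝ → ℂ}

theorem comp_neg (h : ExtendsToHalfPlane σ F) : ExtendsToHalfPlane (-σ) (fun x => F (-x)) := by
  obtain ⟨G, hc, hd, ⟨C, hC⟩, hG⟩ := h
  have hmaps : ∀ {r : ℝ → Prop},
      Set.MapsTo (fun z : ℂ => -z) {z | r (-σ * z.im)} {z | r (σ * z.im)} :=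
    fun {_} z hz => by simpa only [Set.mem_ofPred_eq, Complex.neg_im, mul_neg, neg_mul] using hz
  refine ⟨fun z => G (-z), hc.comp continuous_neg.continuousOn hmaps,
    hd.comp differentiable_neg.differentiableOn hmaps, ⟨C, fun z hz => hC _ (hmaps hz)⟩,
    fun x => ?_⟩
  simpa only [Complex.ofReal_neg] using hG (-x)

theorem apply_eq_apply (h₁ : ExtendsToHalfPlane 1 F) (h₂ : ExtendsToHalfPlane (-1) F) (x y : ℝ) :
    F x = F y := by
  obtain ⟨G₁, hc₁, hd₁, ⟨C₁, hC₁⟩, hG₁⟩ := h₁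
  obtain ⟨G₂, hc₂, hd₂, ⟨C₂, hC₂⟩, hG₂⟩ := h₂
  simp only [one_mul, neg_mul, Left.nonneg_neg_iff, Left.neg_pos_iff] at hc₁ hd₁ hC₁ hc₂ hd₂ hC₂
  set G : ℂ → ℂ := fun z => if 0 ≤ z.im then G₁ z else G₂ z
  have hcont : Continuous G := by
    refine continuous_if_le continuous_const Complex.continuous_im hc₁ hc₂ fun z hz => ?_
    rw [← Complex.re_add_im z, ← hz, Complex.ofReal_zero, zero_mul, add_zero, hG₁, hG₂]
  have hdiff : ∀ z : ℂ, z.im ≠ 0 → DifferentiableAt ℂ G z := by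
    intro z hz
    rcases hz.lt_or_gt with hneg | hpos
    · have hnhds := (isOpen_lt Complex.continuous_im continuous_const).mem_nhds hneg
      refine (hd₂.differentiableAt hnhds).congr_of_eventuallyEq ?_
      filter_upwards [hnhds] with w hw using if_neg (not_le.2 hw)
    · have hnhds := (isOpen_lt continuous_const Complex.continuous_im).mem_nhds hpos
      refine (hd₁.differentiableAt hnhds).congr_of_eventuallyEq ?_
      filter_upwards [hnhds] with w hw using if_pos hw.le
  have hbdd : Bornology.IsBounded (Set.range G) := by
    refine isBounded_iff_forall_norm_le.2 ⟨max C₁ C₂, ?_⟩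
    rintro _ ⟨z, rfl⟩
    by_cases hz : 0 ≤ z.im
    · simpa only [G, if_pos hz] using (hC₁ z hz).trans (le_max_left _ _)
    · simpa only [G, if_neg hz] using (hC₂ z (not_le.1 hz).le).trans (le_max_right _ _)
  have hGF : ∀ x : ℝ, G x = F x := fun x => (if_pos (by simp)).trans (hG₁ x)
  rw [← hGF, ← hGF]
  exact (Complex.differentiable_of_continuous_of_differentiableAt_im_ne_zero hcont hdiff
    ).apply_eq_apply_of_bounded hbdd _ _

end ExtendsToHalfPlane

theorem stmt2_general {H : Type*} [NormedAddCommGroup H] [InnerProductSpace ℂ H] [CompleteSpace H]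
    (A B : VonNeumannAlgebra H) (Ω : H)
    (U : ℝ → H →L[ℂ] H)
    (hone : U 0 = 1)
    (hunitary : ∀ (a : ℝ) (ξ η : H), ⟪U a ξ, U a η⟫_ℂ = ⟪ξ, η⟫_ℂ)
    (hpos : HasPositiveGenerator U)
    (hΩinv : ∀ a : ℝ, U a Ω = Ω)
    (hcomm : ∀ a : ℝ, ∀ X ∈ A, ∀ Y ∈ B, Commute (U a * X * U (-a)) Y)
    (hcluster : ∀ X ∈ A, ∀ Y ∈ B,
      Tendsto (fun a : ℝ => ⟪Ω, ((U a * X * U (-a)) * Y) Ω⟫_ℂ) atTop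
        (nhds (⟪Ω, X Ω⟫_ℂ * ⟪Ω, Y Ω⟫_ℂ))) :
    ∀ X ∈ A, ∀ Y ∈ B, ⟪Ω, (X * Y) Ω⟫_ℂ = ⟪Ω, X Ω⟫_ℂ * ⟪Ω, Y Ω⟫_ℂ := by
  intro X hX Y hY
  have hΩU : ∀ a ζ, ⟪Ω, U a ζ⟫_ℂ = ⟪Ω, ζ⟫_ℂ := fun a ζ => by
    simpa only [hΩinv] using hunitary a Ω ζ
  have hupper : ExtendsToHalfPlane 1 fun a => ⟪Ω, ((U a * X * U (-a)) * Y) Ω⟫_ℂ := by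
    convert hpos (Y.adjoint Ω) (X Ω) using 2 with a
    rw [(hcomm a X hX Y hY).eq]
    simp only [mul_apply_eq_comp, hΩinv, ContinuousLinearMap.adjoint_inner_left]
  have hlower : ExtendsToHalfPlane (-1) fun a => ⟪Ω, ((U a * X * U (-a)) * Y) Ω⟫_ℂ := by
    convert (hpos (X.adjoint Ω) (Y Ω)).comp_neg using 2 with a
    simp only [mul_apply_eq_comp, hΩU, ContinuousLinearMap.adjoint_inner_left]
  have hlim := (tendsto_const_nhds (f := atTop)).congr fun a =>
    (hupper.apply_eq_apply hlower a 0).symm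
  simpa only [neg_zero, hone, one_mul, mul_one] using tendsto_nhds_unique hlim (hcluster X hX Y hY)

/-- commuting von Neumann algebras `A`, `B` with cyclic unit vector `Ω`,
a one-parameter unitary group `U` with positive generator fixing `Ω`, normalizing `A`,
whose translates of `A` commute with `B`, and satisfying the cluster property.  Then
the vacuum factorizes: `⟪Ω, X Y Ω⟫ = ⟪Ω, X Ω⟫ ⟪Ω, Y Ω⟫` for `X ∈ A`, `Y ∈ B`. -/
theorem stmt2 {H : Type*} [NormedAddCommGroup H] [InnerProductSpace ℂ H] [CompleteSpace H]
    (A B : VonNeumannAlgebra H) (Ω : H) (hΩ : ‖Ω‖ = 1)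
    (hABcomm : ∀ X ∈ A, ∀ Y ∈ B, Commute X Y)
    (hcyclic : Dense (Submodule.span ℂ
      {ξ : H | ∃ X ∈ A, ∃ Y ∈ B, ξ = (X * Y) Ω} : Set H))
    (U : ℝ → H →L[ℂ] H)
    (hgroup : ∀ a b : ℝ, U a * U b = U (a + b)) (hone : U 0 = 1)
    (hunitary : ∀ (a : ℝ) (ξ η : H), ⟪U a ξ, U a η⟫_ℂ = ⟪ξ, η⟫_ℂ)
    (hsurj : ∀ a : ℝ, Function.Surjective (U a))
    (hstrongcont : ∀ ξ : H, Continuous fun a : ℝ => U a ξ)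
    (hpos : HasPositiveGenerator U)
    (hΩinv : ∀ a : ℝ, U a Ω = Ω)
    (hAinv : ∀ a : ℝ, ∀ X ∈ A, U a * X * U (-a) ∈ A)
    (hcomm : ∀ a : ℝ, ∀ X ∈ A, ∀ Y ∈ B, Commute (U a * X * U (-a)) Y)
    (hcluster : ∀ X ∈ A, ∀ Y ∈ B,
      Tendsto (fun a : ℝ => ⟪Ω, ((U a * X * U (-a)) * Y) Ω⟫_ℂ) atTop
        (nhds (⟪Ω, X Ω⟫_ℂ * ⟪Ω, Y Ω⟫_ℂ))) :
    ∀ X ∈ A, ∀ Y ∈ B, ⟪Ω, (X * Y) Ω⟫_ℂ = ⟪Ω, X Ω⟫_ℂ * ⟪Ω, Y Ω⟫_ℂ :=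
  stmt2_general A B Ω U hone hunitary hpos hΩinv hcomm hcluster
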